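/- Let ρ be an even Schwartz function with ρ̂ supported in [-1,1], L ≥ 1, ψ ∈ (0,1), and θ ∈ (0,1). Define U(l) = ρ̂(l/L)·2cos(2πlψ) - ρ̂((l+1)/L)·2cos(2π(l+1)ψ) for integers l ≥ 0, and a(n) = sin((n+1)πθ)/sin(πθ). Then ρ_L(θ - ψ) + ρ_L(-θ - ψ) = (1/L)·Σ_{0 ≤ l ≤ L} U(l)·a(2l). -/

import Mathlib

open Complex Real MeasureTheory Filter Asymptotics

lemma aux_dilation (f : ℝ → ℂ) (L : ℝ) (hL : 0 < L) (ξ : ℝ) :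
    FourierTransform.fourier (fun x => f (L * x)) ξ
      = (1 / L : ℂ) * FourierTransform.fourier f (ξ / L) := by
  rw [Real.fourier_real_eq_integral_exp_smul,
    Real.fourier_real_eq_integral_exp_smul]
  have h := MeasureTheory.Measure.integral_comp_mul_left
    (fun v : ℝ => Complex.exp (↑(-2 * π * v * (ξ / L)) * Complex.I) • f v) L
  have h2 : (∫ x : ℝ, Complex.exp (↑(-2 * π * (L * x) * (ξ / L)) * Complex.I) • f (L * x))
      = (∫ x : ℝ, Complex.exp (↑(-2 * π * x * ξ) * Complex.I) • f (L * x)) := by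
    have harg : ∀ x : ℝ, -2 * π * (L * x) * (ξ / L) = -2 * π * x * ξ := by
      intro x; field_simp
    congr 1; funext x; rw [harg]
  rw [← h2, h]
  rw [abs_of_pos (inv_pos.2 hL)]
  rw [← smul_eq_mul, Complex.real_smul]
  norm_num

lemma aux_even (f : ℝ → ℂ) (hf : ∀ x, f (-x) = f x) (ξ : ℝ) :
    FourierTransform.fourier f (-ξ) = FourierTransform.fourier f ξ := by
  rw [Real.fourier_real_eq_integral_exp_smul,
    Real.fourier_real_eq_integral_exp_smul]
  rw [← MeasureTheory.integral_neg_eq_self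
    (fun v : ℝ => Complex.exp (↑(-2 * π * v * ξ) * Complex.I) • f v)]
  congr 1; funext v
  rw [hf]
  norm_num

lemma aux_tele (v w : ℕ → ℂ) (n : ℕ) :
    ∑ l ∈ Finset.range (n + 1), (v l - v (l + 1)) * w l
      = v 0 * w 0 + (∑ l ∈ Finset.range n, v (l + 1) * (w (l + 1) - w l))
        - v (n + 1) * w n := by
  induction n with
  | zero => simp; ring
  | succ n ih => rw [Finset.sum_range_succ, ih, Finset.sum_range_succ]; ring

/-- Abel-summed (telescoped) form of the symmetrized Fourier expansion:
ρ_L(θ-ψ) + ρ_L(-θ-ψ) = (1/L)·Σ_{0 ≤ l ≤ L} U(l)·a(2l), where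
U(l) = ρ̂(l/L)·2cos(2πlψ) - ρ̂((l+1)/L)·2cos(2π(l+1)ψ) and
a(n) = sin((n+1)πθ)/sin(πθ). -/
theorem stmt6 (ρ : SchwartzMap ℝ ℝ) (heven : ∀ t : ℝ, ρ (-t) = ρ t)
    (L : ℝ) (hL : 1 ≤ L) (ψ : ℝ) (hψ : ψ ∈ Set.Ioo (0 : ℝ) 1)
    (θ : ℝ) (hθ : θ ∈ Set.Ioo (0 : ℝ) 1)
    (ρhat : ℝ → ℂ)
    (hhat : ∀ ξ : ℝ, ρhat ξ = FourierTransform.fourier (fun t : ℝ => (ρ t : ℂ)) ξ)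
    (hsupp : ∀ ξ : ℝ, 1 < |ξ| → ρhat ξ = 0)
    (ρL : ℝ → ℝ) (hρL : ∀ t : ℝ, ρL t = ∑' n : ℤ, ρ (L * (t + n)))
    (U : ℕ → ℂ)
    (hU : ∀ l : ℕ, U l =
      ρhat ((l : ℝ) / L) * (2 * Real.cos (2 * Real.pi * l * ψ))
        - ρhat (((l : ℝ) + 1) / L) * (2 * Real.cos (2 * Real.pi * (l + 1) * ψ)))
    (a : ℕ → ℝ)
    (ha : ∀ n : ℕ, a n = Real.sin ((n + 1) * Real.pi * θ) / Real.sin (Real.pi * θ)) :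
    ((ρL (θ - ψ) + ρL (-θ - ψ) : ℝ) : ℂ) =
      (1 / L : ℂ) * ∑ l ∈ Finset.range (⌊L⌋₊ + 1), U l * (a (2 * l) : ℝ) := by
  have hL0 : 0 < L := lt_of_lt_of_le one_pos hL
  set N := ⌊L⌋₊ with hN
  have hLN : L < (N : ℝ) + 1 := Nat.lt_floor_add_one L
  set g : ℝ → ℂ := fun x => ((ρ (L * x) : ℝ) : ℂ) with hg
  -- vanishing of ρhat
  have hvan : ∀ x : ℝ, L < |x| → ρhat (x / L) = 0 := by
    intro x hx
    apply hsupp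
    rw [abs_div, abs_of_pos hL0]
    exact (one_lt_div hL0).2 hx
  -- Fourier transform of g
  have hFg : ∀ ξ : ℝ, FourierTransform.fourier g ξ = (1 / L : ℂ) * ρhat (ξ / L) := by
    intro ξ
    rw [hhat]
    exact aux_dilation (fun t : ℝ => (ρ t : ℂ)) L hL0 ξ
  -- evenness of ρhat
  have hρhat_even : ∀ ξ : ℝ, ρhat (-ξ) = ρhat ξ := by
    intro ξ
    rw [hhat, hhat]
    exact aux_even _ (fun x => by rw [heven x]) ξ
  -- continuity of g
  have hgc : Continuous g :=
    Complex.continuous_ofReal.comp (ρ.continuous.comp (continuous_const.mul continuous_id))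
  -- decay of g
  have hbig : g =O[cocompact ℝ] (fun x : ℝ => |x| ^ (-(2:ℝ))) := by
    have htend : Tendsto (fun x : ℝ => L * x) (cocompact ℝ) (cocompact ℝ) := by
      rw [cocompact_eq_atBot_atTop, Filter.tendsto_sup]
      constructor
      · exact (Filter.Tendsto.const_mul_atBot hL0 tendsto_id).mono_right le_sup_left
      · exact (Filter.Tendsto.const_mul_atTop hL0 tendsto_id).mono_right le_sup_right
    have hρO : (fun x : ℝ => ρ x) =O[cocompact ℝ] (fun x : ℝ => ‖x‖ ^ (-(2:ℝ))) :=
      ρ.isBigO_cocompact_rpow (-(2:ℝ))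
    have h2 := hρO.comp_tendsto htend
    have h0 : g =O[cocompact ℝ] (fun x : ℝ => ρ (L * x)) := by
      apply Asymptotics.isBigO_of_le
      intro x
      simp [g, Complex.norm_real]
    refine (h0.trans h2).trans ?_
    have heq : ∀ x : ℝ, ‖L * x‖ ^ (-(2:ℝ)) = |L| ^ (-(2:ℝ)) * |x| ^ (-(2:ℝ)) := by
      intro x
      rw [Real.norm_eq_abs, abs_mul, Real.mul_rpow (abs_nonneg _) (abs_nonneg _)]
    calc ((fun x : ℝ => ‖x‖ ^ (-(2:ℝ))) ∘ fun x : ℝ => L * x)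
        = fun x : ℝ => |L| ^ (-(2:ℝ)) * |x| ^ (-(2:ℝ)) := by funext x; exact heq x
      _ =O[cocompact ℝ] fun x : ℝ => |x| ^ (-(2:ℝ)) :=
          (Asymptotics.isBigO_refl _ _).const_mul_left _
  -- summability of 𝓕 g over ℤ
  have hzv : ∀ n : ℤ, ¬(-(N:ℤ) ≤ n ∧ n ≤ (N:ℤ)) → ρhat ((n : ℝ) / L) = 0 := by
    intro n hn
    apply hvan
    have h1 : (N : ℤ) + 1 ≤ |n| := by
      by_contra hcon
      push_neg at hcon
      exact hn (abs_le.mp (by omega))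
    have : ((N : ℝ) + 1) ≤ |(n : ℝ)| := by
      rw [← Int.cast_abs]
      exact_mod_cast h1
    linarith
  have hsumF : Summable fun n : ℤ => FourierTransform.fourier g n := by
    apply summable_of_ne_finset_zero (s := Finset.Icc (-(N:ℤ)) (N:ℤ))
    intro n hn
    rw [hFg, hzv n (by simpa using hn), mul_zero]
  -- Poisson summation
  have poisson : ∀ t : ℝ, ((ρL t : ℝ) : ℂ)
      = ∑' n : ℤ, FourierTransform.fourier g n * fourier n (t : UnitAddCircle) := by
    intro t
    rw [hρL, Complex.ofReal_tsum]
    exact Real.tsum_eq_tsum_fourier_of_rpow_decay_of_summable hgc one_lt_two hbig hsumF t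
  -- notation
  set Φ : ℝ → ℤ → ℂ := fun t n => FourierTransform.fourier g n * fourier n (t : UnitAddCircle)
    with hΦdef
  have hΦz : ∀ (t : ℝ) (n : ℤ), ¬(-(N:ℤ) ≤ n ∧ n ≤ (N:ℤ)) → Φ t n = 0 := by
    intro t n hn
    simp only [Φ]
    rw [hFg, hzv n hn, mul_zero, zero_mul]
  -- decomposition of the tsum into finite sums
  have hdecomp : ∀ t : ℝ, (∑' n : ℤ, Φ t n)
      = (∑ n ∈ Finset.range N, Φ t ((n:ℤ)+1)) + Φ t 0
        + ∑ n ∈ Finset.range N, Φ t (-((n:ℤ)+1)) := by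
    intro t
    have z1 : ∀ n : ℕ, n ∉ Finset.range N → Φ t ((n:ℤ)+1) = 0 := by
      intro n hn
      apply hΦz
      simp only [Finset.mem_range, not_lt] at hn
      push_neg
      intro _
      omega
    have z2 : ∀ n : ℕ, n ∉ Finset.range N → Φ t (-((n:ℤ)+1)) = 0 := by
      intro n hn
      apply hΦz
      simp only [Finset.mem_range, not_lt] at hn
      push_neg
      intro h
      omega
    have s1 : Summable fun n : ℕ => Φ t ((n:ℤ)+1) := summable_of_ne_finset_zero z1
    have s2 : Summable fun n : ℕ => Φ t (-((n:ℤ)+1)) := summable_of_ne_finset_zero z2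
    rw [tsum_of_add_one_of_neg_add_one s1 s2, tsum_eq_sum z1, tsum_eq_sum z2]
  -- fourier evaluation
  have hfour : ∀ (n : ℤ) (t : ℝ), fourier n (t : UnitAddCircle)
      = Complex.exp (2 * π * Complex.I * n * t) := by
    intro n t
    rw [fourier_coe_apply]
    norm_num
  have hΦ0 : ∀ t : ℝ, Φ t 0 = (1 / L : ℂ) * ρhat 0 := by
    intro t
    simp only [Φ]
    rw [hFg]
    norm_num
  -- trig facts
  have hsin : Real.sin (π * θ) ≠ 0 := by
    have h1 : (0:ℝ) < π * θ := mul_pos Real.pi_pos hθ.1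
    have h2 : π * θ < π := by nlinarith [Real.pi_pos, hθ.2]
    exact ne_of_gt (Real.sin_pos_of_pos_of_lt_pi h1 h2)
  have hcos2 : ∀ m : ℝ,
      Complex.exp (2 * π * Complex.I * m * (θ - ψ)) + Complex.exp (2 * π * Complex.I * (-m) * (θ - ψ))
        + (Complex.exp (2 * π * Complex.I * m * (-θ - ψ))
            + Complex.exp (2 * π * Complex.I * (-m) * (-θ - ψ)))
      = (((2 * Real.cos (2 * π * m * ψ)) * (2 * Real.cos (2 * π * m * θ)) : ℝ) : ℂ) := by
    intro m
    have e1 : Complex.exp (2 * π * Complex.I * m * (θ - ψ))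
        + Complex.exp (2 * π * Complex.I * (-m) * (θ - ψ))
        = 2 * Complex.cos ((2 * π * m * (θ - ψ) : ℝ) : ℂ) := by
      rw [Complex.two_cos]
      congr 1 <;> push_cast <;> ring
    have e2 : Complex.exp (2 * π * Complex.I * m * (-θ - ψ))
        + Complex.exp (2 * π * Complex.I * (-m) * (-θ - ψ))
        = 2 * Complex.cos ((2 * π * m * (-θ - ψ) : ℝ) : ℂ) := by
      rw [Complex.two_cos]
      congr 1 <;> push_cast <;> ring
    rw [e1, e2, ← Complex.ofReal_cos, ← Complex.ofReal_cos]
    have key : Real.cos (2 * π * m * (θ - ψ)) + Real.cos (2 * π * m * (-θ - ψ))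
        = (2 * Real.cos (2 * π * m * ψ)) * (2 * Real.cos (2 * π * m * θ)) / 2 := by
      have k1 := Real.cos_sub (2 * π * m * θ) (2 * π * m * ψ)
      have k2 := Real.cos_add (2 * π * m * θ) (2 * π * m * ψ)
      have a1 : 2 * π * m * (θ - ψ) = 2 * π * m * θ - 2 * π * m * ψ := by ring
      have a2 : 2 * π * m * (-θ - ψ) = -(2 * π * m * θ + 2 * π * m * ψ) := by ring
      rw [a1, a2, Real.cos_neg, k1, k2]
      ring
    norm_cast
    linarith [key]
  -- the paired term computation
  have hpair : ∀ n : ℕ,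
      Φ (θ - ψ) ((n:ℤ)+1) + Φ (θ - ψ) (-((n:ℤ)+1))
        + (Φ (-θ - ψ) ((n:ℤ)+1) + Φ (-θ - ψ) (-((n:ℤ)+1)))
      = (1 / L : ℂ) * (ρhat (((n:ℝ)+1) / L)
          * (((2 * Real.cos (2 * π * ((n:ℝ)+1) * ψ)) * (2 * Real.cos (2 * π * ((n:ℝ)+1) * θ)) : ℝ))) := by
    intro n
    simp only [Φ]
    rw [hFg, hFg, hfour, hfour, hfour, hfour]
    have c1 : (((-((n:ℤ)+1) : ℤ) : ℝ)) / L = -((((n:ℝ)+1)) / L) := by push_cast; ring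
    have c2 : ((((n:ℤ)+1 : ℤ) : ℝ)) / L = ((n:ℝ)+1) / L := by push_cast; ring
    rw [c1, c2, hρhat_even]
    have c3 : (((-((n:ℤ)+1) : ℤ)) : ℂ) = -(((n:ℝ)+1 : ℝ) : ℂ) := by push_cast; ring
    have c4 : ((((n:ℤ)+1 : ℤ)) : ℂ) = (((n:ℝ)+1 : ℝ) : ℂ) := by push_cast; ring
    rw [c3, c4]
    have hthis := hcos2 ((n:ℝ)+1)
    push_cast at hthis ⊢
    linear_combination (1 / (L:ℂ)) * ρhat (((n:ℝ)+1) / L) * hthis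
  -- Abel summation on the right-hand side
  set v : ℕ → ℂ := fun l => ρhat ((l:ℝ) / L) * (2 * Real.cos (2 * π * (l:ℝ) * ψ)) with hvdef
  set w : ℕ → ℂ := fun l => ((a (2*l) : ℝ) : ℂ) with hwdef
  have hUv : ∀ l : ℕ, U l = v l - v (l+1) := by
    intro l
    rw [hU]
    simp only [v]
    push_cast
    ring
  have hvN : v (N+1) = 0 := by
    simp only [v]
    have hx : L < |((N+1 : ℕ) : ℝ)| := by
      rw [abs_of_pos (by positivity)]
      push_cast
      linarith
    rw [hvan _ hx, zero_mul]
  have ha0 : a 0 = 1 := by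
    rw [ha]
    push_cast
    rw [zero_add, one_mul, div_self hsin]
  have hw0 : w 0 = 1 := by
    simp only [w]
    norm_num [ha0]
  have hv0 : v 0 = ρhat 0 * 2 := by
    simp only [v]
    norm_num
  have hwdiff : ∀ l : ℕ, w (l+1) - w l = ((2 * Real.cos (2 * π * ((l:ℝ)+1) * θ) : ℝ) : ℂ) := by
    intro l
    simp only [w]
    rw [← Complex.ofReal_sub]
    congr 1
    rw [ha, ha, div_sub_div_same]
    rw [div_eq_iff hsin]
    have key : ∀ x y : ℝ, Real.sin (x + y) - Real.sin (x - y) = 2 * Real.cos x * Real.sin y := by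
      intro x y
      rw [Real.sin_add, Real.sin_sub]
      ring
    have k := key ((2*(l:ℝ)+2) * (π * θ)) (π * θ)
    push_cast
    ring_nf
    ring_nf at k
    linarith
  have hRHS : ∑ l ∈ Finset.range (N+1), U l * w l
      = v 0 + ∑ l ∈ Finset.range N, v (l+1) * ((2 * Real.cos (2 * π * ((l:ℝ)+1) * θ) : ℝ) : ℂ) := by
    have h1 : ∑ l ∈ Finset.range (N+1), U l * w l
        = ∑ l ∈ Finset.range (N+1), (v l - v (l+1)) * w l :=
      Finset.sum_congr rfl fun l _ => by rw [hUv]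
    rw [h1, aux_tele v w N, hvN, hw0, mul_one, zero_mul, sub_zero]
    congr 1
    exact Finset.sum_congr rfl fun l _ => by rw [hwdiff]
  -- put everything together
  rw [Complex.ofReal_add, poisson (θ - ψ), poisson (-θ - ψ)]
  show (∑' n : ℤ, Φ (θ - ψ) n) + (∑' n : ℤ, Φ (-θ - ψ) n) = _
  rw [hdecomp, hdecomp, hΦ0, hΦ0, hRHS]
  rw [mul_add, Finset.mul_sum]
  have hsum : ∑ n ∈ Finset.range N,
      (Φ (θ - ψ) ((n:ℤ)+1) + Φ (θ - ψ) (-((n:ℤ)+1))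
        + (Φ (-θ - ψ) ((n:ℤ)+1) + Φ (-θ - ψ) (-((n:ℤ)+1))))
      = ∑ l ∈ Finset.range N,
        (1 / L : ℂ) * (v (l+1) * ((2 * Real.cos (2 * π * ((l:ℝ)+1) * θ) : ℝ) : ℂ)) := by
    refine Finset.sum_congr rfl fun n _ => ?_
    rw [hpair n]
    simp only [v]
    push_cast
    ring
  rw [← hsum]
  simp only [Finset.sum_add_distrib]
  rw [hv0]
  ring
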